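/- arXiv:2211.00112 — 4 statements merged into one kernel-verified Lean document; each statement's English description precedes it below -/
import Mathlib

section
/- Let X ~ Binomial(2n, 1/2) and Z = min(n, X) for a positive integer n. Then E[Z] = n − (n/2) · C(2n, n) / 2^{2n}, and consequently E[Z] ≤ n − √(n/(6π)). -/
open Real Finset

lemma tele_aux (n m : ℕ) (hm : m ≤ 2 * n) :
    ∑ i ∈ Finset.range m, ((n : ℝ) - i) * (Nat.choose (2 * n) i : ℝ)
      = (m : ℝ) * (Nat.choose (2 * n) m : ℝ) / 2 := by
  induction m with
  | zero => simp
  | succ m ih =>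
    have hm' : m ≤ 2 * n := by omega
    rw [Finset.sum_range_succ, ih hm']
    have h := Nat.choose_succ_right_eq (2 * n) m
    have hc : ((2 * n).choose (m + 1) : ℝ) * (m + 1)
        = ((2 * n).choose m : ℝ) * (2 * (n : ℝ) - m) := by
      have h2 : ((2 * n - m : ℕ) : ℝ) = 2 * (n : ℝ) - m := by
        push_cast [Nat.cast_sub hm']; ring
      calc ((2 * n).choose (m + 1) : ℝ) * (m + 1)
          = (((2 * n).choose (m + 1) * (m + 1) : ℕ) : ℝ) := by push_cast; ring
        _ = (((2 * n).choose m * (2 * n - m) : ℕ) : ℝ) := by rw [h]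
        _ = ((2 * n).choose m : ℝ) * (2 * (n : ℝ) - m) := by push_cast [h2]; ring
    push_cast
    push_cast at hc
    linarith [hc]

lemma cb_lower (n : ℕ) (hn : 1 ≤ n) :
    (4 : ℝ) ^ n ≤ 2 * Real.sqrt n * (Nat.centralBinom n : ℝ) := by
  induction n, hn using Nat.le_induction with
  | base =>
    simp [Nat.centralBinom]
    norm_num [Real.sqrt_one]
  | succ n hn ih =>
    have key := Nat.succ_mul_centralBinom_succ n
    have keyR : ((n : ℝ) + 1) * (Nat.centralBinom (n + 1) : ℝ)
        = 2 * (2 * n + 1) * (Nat.centralBinom n : ℝ) := by exact_mod_cast key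
    set s := Real.sqrt n with hs
    set t := Real.sqrt ((n + 1 : ℕ) : ℝ) with ht
    have hs0 : 0 ≤ s := Real.sqrt_nonneg _
    have ht0 : 0 ≤ t := Real.sqrt_nonneg _
    have hs2 : s ^ 2 = n := Real.sq_sqrt (by positivity)
    have ht2 : t ^ 2 = (n : ℝ) + 1 := by
      rw [ht, Real.sq_sqrt (by positivity)]
      push_cast; ring
    have hst : 2 * (s * t) ≤ 2 * n + 1 := by nlinarith [sq_nonneg (s - t)]
    have hC0 : (0 : ℝ) ≤ (Nat.centralBinom n : ℝ) := by positivity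
    have hC1 : (0 : ℝ) ≤ (Nat.centralBinom (n + 1) : ℝ) := by positivity
    have hs1 : 1 ≤ s := by
      rw [hs, show (1:ℝ) = Real.sqrt 1 by simp]
      exact Real.sqrt_le_sqrt (by exact_mod_cast hn)
    have step : (4 : ℝ) ^ (n + 1) ≤ 8 * s * (Nat.centralBinom n : ℝ) := by
      rw [pow_succ]
      nlinarith [ih]
    -- 8 s C n = 8 s (n+1) C(n+1) / (2(2n+1)) ≤ 2 t C(n+1)
    have h3 : 2 * s * ((n : ℝ) + 1) ≤ (2 * n + 1) * t := by
      have h := mul_le_mul_of_nonneg_right hst ht0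
      nlinarith [ht2]
    have h3C : 2 * s * ((n : ℝ) + 1) * (Nat.centralBinom (n + 1) : ℝ)
        ≤ (2 * n + 1) * t * (Nat.centralBinom (n + 1) : ℝ) :=
      mul_le_mul_of_nonneg_right h3 hC1
    have keyRs : s * (((n : ℝ) + 1) * (Nat.centralBinom (n + 1) : ℝ))
        = s * (2 * (2 * n + 1) * (Nat.centralBinom n : ℝ)) := by rw [keyR]
    have goal2 : 8 * s * (Nat.centralBinom n : ℝ)
        ≤ 2 * t * (Nat.centralBinom (n + 1) : ℝ) := by
      nlinarith [keyRs, h3C, show (0:ℝ) < 2 * (n:ℝ) + 1 by positivity]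
    calc (4 : ℝ) ^ (n + 1) ≤ 8 * s * (Nat.centralBinom n : ℝ) := step
      _ ≤ 2 * t * (Nat.centralBinom (n + 1) : ℝ) := goal2

/-- For `X ~ Binomial(2n, 1/2)` and `Z = min(n, X)`, with `n ≥ 1`:
`E[Z] = n − (n/2)·C(2n,n)/2^{2n}` and consequently `E[Z] ≤ n − √(n/(6π))`. -/
theorem stmt_4 (n : ℕ) (hn : 1 ≤ n) :
    (∑ i ∈ Finset.range (2 * n + 1),
        ((Nat.choose (2 * n) i : ℝ) / 2 ^ (2 * n)) * min (n : ℝ) (i : ℝ))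
      = (n : ℝ) - ((n : ℝ) / 2) * (Nat.choose (2 * n) n : ℝ) / 2 ^ (2 * n)
    ∧ (∑ i ∈ Finset.range (2 * n + 1),
        ((Nat.choose (2 * n) i : ℝ) / 2 ^ (2 * n)) * min (n : ℝ) (i : ℝ))
      ≤ (n : ℝ) - Real.sqrt ((n : ℝ) / (6 * π)) := by
  have hpow : (0 : ℝ) < 2 ^ (2 * n) := by positivity
  -- Part 1
  have hmin : ∀ i : ℕ, min (n : ℝ) (i : ℝ) = (n : ℝ) - max ((n : ℝ) - i) 0 := by
    intro i
    rcases le_total (n : ℝ) (i : ℝ) with h | h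
    · rw [min_eq_left h, max_eq_right (by linarith)]; ring
    · rw [min_eq_right h, max_eq_left (by linarith)]; ring
  have hsum_choose : ∑ i ∈ Finset.range (2 * n + 1), ((Nat.choose (2 * n) i : ℝ))
      = 2 ^ (2 * n) := by
    exact_mod_cast congrArg (Nat.cast : ℕ → ℝ) (Nat.sum_range_choose (2 * n))
  have hmaxsum : ∑ i ∈ Finset.range (2 * n + 1),
      (Nat.choose (2 * n) i : ℝ) * max ((n : ℝ) - i) 0
      = (n : ℝ) * (Nat.choose (2 * n) n : ℝ) / 2 := by
    rw [← Finset.sum_subset (Finset.range_subset_range.2 (by omega : n ≤ 2 * n + 1))]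
    · rw [← tele_aux n n (by omega)]
      apply Finset.sum_congr rfl
      intro i hi
      rw [Finset.mem_range] at hi
      have hle : (i : ℝ) ≤ n := by exact_mod_cast hi.le
      rw [max_eq_left (by linarith)]
      ring
    · intro i _ hi
      rw [Finset.mem_range, not_lt] at hi
      have hle : (n : ℝ) ≤ i := by exact_mod_cast hi
      rw [max_eq_right (by linarith)]
      ring
  have part1 : (∑ i ∈ Finset.range (2 * n + 1),
        ((Nat.choose (2 * n) i : ℝ) / 2 ^ (2 * n)) * min (n : ℝ) (i : ℝ))
      = (n : ℝ) - ((n : ℝ) / 2) * (Nat.choose (2 * n) n : ℝ) / 2 ^ (2 * n) := by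
    have : ∀ i ∈ Finset.range (2 * n + 1),
        ((Nat.choose (2 * n) i : ℝ) / 2 ^ (2 * n)) * min (n : ℝ) (i : ℝ)
        = (Nat.choose (2 * n) i : ℝ) * (n : ℝ) / 2 ^ (2 * n)
          - (Nat.choose (2 * n) i : ℝ) * max ((n : ℝ) - i) 0 / 2 ^ (2 * n) := by
      intro i _
      rw [hmin i]; field_simp
    rw [Finset.sum_congr rfl this, Finset.sum_sub_distrib]
    rw [← Finset.sum_div, ← Finset.sum_div, ← Finset.sum_mul, hsum_choose, hmaxsum]
    field_simp
    try ring
  refine ⟨part1, ?_⟩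
  rw [part1]
  have hcb : (4 : ℝ) ^ n ≤ 2 * Real.sqrt n * (Nat.choose (2 * n) n : ℝ) := by
    have := cb_lower n hn
    rwa [Nat.centralBinom] at this
  have hs0 : (0 : ℝ) < Real.sqrt n := Real.sqrt_pos.2 (by exact_mod_cast hn)
  have hs2 : (Real.sqrt n) ^ 2 = (n : ℝ) := Real.sq_sqrt (by positivity)
  have hpow4 : (2 : ℝ) ^ (2 * n) = 4 ^ n := by
    rw [pow_mul]; norm_num
  -- (n/2) * C / 2^(2n) ≥ sqrt n / 4
  have key : Real.sqrt n / 4 ≤ ((n : ℝ) / 2) * (Nat.choose (2 * n) n : ℝ) / 2 ^ (2 * n) := by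
    rw [hpow4, div_le_div_iff₀ (by norm_num) (by positivity : (0:ℝ) < (4:ℝ)^n)]
    -- sqrt n * 4^n ≤ (n/2) * C * 4
    nlinarith [mul_le_mul_of_nonneg_left hcb (le_of_lt hs0), hs2, hs0]
  have hsqrt : Real.sqrt ((n : ℝ) / (6 * π)) ≤ Real.sqrt n / 4 := by
    have hpi : (16 : ℝ) ≤ 6 * π := by nlinarith [Real.pi_gt_three]
    rw [show (n : ℝ) / (6 * π) = (n : ℝ) * (6 * π)⁻¹ by ring,
        Real.sqrt_mul (by positivity)]
    have h1 : Real.sqrt (6 * π)⁻¹ ≤ 1 / 4 := by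
      rw [show (1 : ℝ) / 4 = Real.sqrt (1 / 16) by
        rw [show (1:ℝ)/16 = (1/4)^2 by norm_num, Real.sqrt_sq (by norm_num)]]
      apply Real.sqrt_le_sqrt
      rw [inv_le_comm₀ (by positivity) (by norm_num)]
      linarith
    calc Real.sqrt n * Real.sqrt (6 * π)⁻¹ ≤ Real.sqrt n * (1 / 4) :=
          mul_le_mul_of_nonneg_left h1 (Real.sqrt_nonneg _)
      _ = Real.sqrt n / 4 := by ring
  linarith
end

section
/- The identity Σ_{i=0}^{n} i·C(2n, i) + Σ_{i=n+1}^{2n} n·C(2n, i) = n·2^{2n} − (n/2)·C(2n, n) holds for every positive integer n. -/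
/-!
The lower half `∑_{i ≤ n} i·C(2n, i)` becomes, via `i·C(2n, i) = 2n·C(2n-1, i-1)`, the halfway sum
`2n·∑_{i < n} C(2n-1, i) = n·4^n / 2` of an odd row. The upper half is `n` times
`∑_{i > n} C(2n, i)`, which by the symmetry `C(2n, i) = C(2n, 2n-i)` is half of `4^n - C(2n, n)`.
-/

open Finset

namespace Nat

theorem two_mul_sum_range_mul_choose_two_mul (n : ℕ) :
    2 * ∑ i ∈ range (n + 1), i * (2 * n).choose i = n * 4 ^ n := by
  cases n with
  | zero => simp
  | succ m =>
    have hshift (i : ℕ) : (i + 1) * (2 * (m + 1)).choose (i + 1) =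
        2 * (m + 1) * (2 * m + 1).choose i := by
      rw [show 2 * (m + 1) = 2 * m + 1 + 1 by ring, add_one_mul_choose_eq, mul_comm]
    rw [sum_range_succ', sum_congr rfl fun i _ => hshift i, ← mul_sum,
      sum_range_choose_halfway]
    ring

theorem two_mul_sum_Icc_choose_two_mul_add_choose (n : ℕ) :
    2 * ∑ i ∈ Icc (n + 1) (2 * n), (2 * n).choose i + (2 * n).choose n = 4 ^ n := by
  have hsymm :
      ∑ i ∈ Icc (n + 1) (2 * n), (2 * n).choose i = ∑ i ∈ range n, (2 * n).choose i := by
    refine sum_nbij' (2 * n - ·) (2 * n - ·) ?_ ?_ ?_ ?_ ?_ <;> intro i hi <;>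
      simp only [mem_Icc, mem_range] at hi ⊢
    all_goals first | omega | exact (choose_symm (by omega)).symm
  have hrow := sum_range_add_sum_Ico (fun i => (2 * n).choose i) (show n + 1 ≤ 2 * n + 1 by omega)
  rw [sum_range_choose, Ico_add_one_right_eq_Icc, sum_range_succ, pow_mul,
    show 2 ^ 2 = 4 from rfl] at hrow
  omega

end Nat

theorem stmt_6_general (n : ℕ) :
    (∑ i ∈ Finset.range (n + 1), (i : ℝ) * (Nat.choose (2 * n) i : ℝ))
      + (∑ i ∈ Finset.Icc (n + 1) (2 * n), (n : ℝ) * (Nat.choose (2 * n) i : ℝ))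
      = (n : ℝ) * 2 ^ (2 * n) - ((n : ℝ) / 2) * (Nat.choose (2 * n) n : ℝ) := by
  have hlower := congrArg (Nat.cast : ℕ → ℝ) (Nat.two_mul_sum_range_mul_choose_two_mul n)
  have hupper := congrArg (Nat.cast : ℕ → ℝ) (Nat.two_mul_sum_Icc_choose_two_mul_add_choose n)
  push_cast at hlower hupper
  rw [← mul_sum, pow_mul]
  linear_combination (hlower + n * hupper) / 2

/-- `Σ_{i=0}^{n} i·C(2n, i) + Σ_{i=n+1}^{2n} n·C(2n, i)
= n·2^{2n} − (n/2)·C(2n, n)` for every positive integer `n` (as real numbers). -/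
theorem stmt_6 (n : ℕ) (hn : 0 < n) :
    (∑ i ∈ Finset.range (n + 1), (i : ℝ) * (Nat.choose (2 * n) i : ℝ))
      + (∑ i ∈ Finset.Icc (n + 1) (2 * n), (n : ℝ) * (Nat.choose (2 * n) i : ℝ))
      = (n : ℝ) * 2 ^ (2 * n) - ((n : ℝ) / 2) * (Nat.choose (2 * n) n : ℝ) :=
  stmt_6_general n
end

section
/- Lipschitz property of the mean-field LP value: if μ_t and μ_t' are two start states of the mean-field LP at time t with ||μ_t − μ_t'||_1 = δ, then |V_{t:T}(μ_t) − V_{t:T}(μ_t')| ≤ (T − t + 1)·R_max·δ/2. -/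
open Finset

/-- Feasibility for the mean-field LP over a horizon of `L` time steps
(`t = 0, ..., L−1`), with `K` clusters, states `S`, actions `A`, transition kernels
`P`, costs `C`, budgets `B`, and start state `μ0`. -/
def MFFeasible {S A : Type} [Fintype S] [Fintype A] (K L : ℕ)
    (P : ℕ → Fin K → S → A → S → ℝ) (C : ℕ → Fin K → S → A → ℝ) (B : ℕ → ℝ)
    (μ0 : Fin K → S → ℝ)
    (mu : ℕ → Fin K → S → ℝ) (al : ℕ → Fin K → S → A → ℝ) : Prop :=
  mu 0 = μ0 ∧
  (∀ t, t + 1 < L → ∀ i s', mu (t + 1) i s' = ∑ s, ∑ a, al t i s a * P t i s a s') ∧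
  (∀ t < L, ∑ i, ∑ s, ∑ a, al t i s a * C t i s a ≤ B t) ∧
  (∀ t < L, ∀ i s, ∑ a, al t i s a = mu t i s) ∧
  (∀ t i s a, 0 ≤ al t i s a)

/-- Optimal value of the mean-field LP: supremum of the total reward over feasible
solutions. -/
noncomputable def MFValue {S A : Type} [Fintype S] [Fintype A] (K L : ℕ)
    (P : ℕ → Fin K → S → A → S → ℝ) (R C : ℕ → Fin K → S → A → ℝ) (B : ℕ → ℝ)
    (μ0 : Fin K → S → ℝ) : ℝ :=
  sSup { r : ℝ | ∃ mu al, MFFeasible K L P C B μ0 mu al ∧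
    r = ∑ t ∈ Finset.range L, ∑ i, ∑ s, ∑ a, al t i s a * R t i s a }

open scoped Classical

section Aux

variable {S A : Type} [Fintype S] [Fintype A]

lemma sum_mul_P (p : S → A → S → ℝ) (hp : ∀ s a, ∑ s', p s a s' = 1) (x : S → A → ℝ) :
    ∑ s', ∑ s, ∑ a, x s a * p s a s' = ∑ s, ∑ a, x s a := by
  rw [Finset.sum_comm]
  refine Finset.sum_congr rfl fun s _ => ?_
  rw [Finset.sum_comm]
  refine Finset.sum_congr rfl fun a _ => ?_
  rw [← Finset.mul_sum, hp, mul_one]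

/-- Evolution of a mass under a fixed action selection rule. -/
noncomputable def nuF (K : ℕ) (P : ℕ → Fin K → S → A → S → ℝ)
    (a0 : ℕ → Fin K → S → A) (n0 : Fin K → S → ℝ) : ℕ → Fin K → S → ℝ
  | 0 => n0
  | (t+1) => fun i s' => ∑ s, nuF K P a0 n0 t i s * P t i s (a0 t i s) s'

lemma nuF_zero (K : ℕ) (P : ℕ → Fin K → S → A → S → ℝ) (a0 : ℕ → Fin K → S → A)
    (n0 : Fin K → S → ℝ) : nuF K P a0 n0 0 = n0 := rfl

lemma nuF_succ (K : ℕ) (P : ℕ → Fin K → S → A → S → ℝ) (a0 : ℕ → Fin K → S → A)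
    (n0 : Fin K → S → ℝ) (t : ℕ) (i : Fin K) (s' : S) :
    nuF K P a0 n0 (t+1) i s' = ∑ s, nuF K P a0 n0 t i s * P t i s (a0 t i s) s' := rfl

lemma nuF_nonneg {K : ℕ} {P : ℕ → Fin K → S → A → S → ℝ} {a0 : ℕ → Fin K → S → A}
    {n0 : Fin K → S → ℝ}
    (hP0 : ∀ t i s a s', 0 ≤ P t i s a s') (hn0 : ∀ i s, 0 ≤ n0 i s) :
    ∀ t i s, 0 ≤ nuF K P a0 n0 t i s := by
  intro t
  induction t with
  | zero => exact hn0
  | succ t ih =>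
    intro i s'
    exact Finset.sum_nonneg fun s _ => mul_nonneg (ih i s) (hP0 t i s (a0 t i s) s')

/-- Scaled-down occupancy measure starting at `m0`. -/
noncomputable def hatM (K : ℕ) (P : ℕ → Fin K → S → A → S → ℝ)
    (mu : ℕ → Fin K → S → ℝ) (al : ℕ → Fin K → S → A → ℝ)
    (m0 : Fin K → S → ℝ) : ℕ → Fin K → S → ℝ
  | 0 => m0
  | (t+1) => fun i s' => ∑ s, ∑ a,
      ((if mu t i s = 0 then 0 else hatM K P mu al m0 t i s / mu t i s) * al t i s a)
        * P t i s a s'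

/-- Scaled-down LP action variables. -/
noncomputable def betaF (K : ℕ) (P : ℕ → Fin K → S → A → S → ℝ)
    (mu : ℕ → Fin K → S → ℝ) (al : ℕ → Fin K → S → A → ℝ)
    (m0 : Fin K → S → ℝ) (t : ℕ) (i : Fin K) (s : S) (a : A) : ℝ :=
  (if mu t i s = 0 then 0 else hatM K P mu al m0 t i s / mu t i s) * al t i s a

lemma hatM_zero (K : ℕ) (P : ℕ → Fin K → S → A → S → ℝ)
    (mu : ℕ → Fin K → S → ℝ) (al : ℕ → Fin K → S → A → ℝ) (m0 : Fin K → S → ℝ) :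
    hatM K P mu al m0 0 = m0 := rfl

lemma hatM_succ (K : ℕ) (P : ℕ → Fin K → S → A → S → ℝ)
    (mu : ℕ → Fin K → S → ℝ) (al : ℕ → Fin K → S → A → ℝ) (m0 : Fin K → S → ℝ)
    (t : ℕ) (i : Fin K) (s' : S) :
    hatM K P mu al m0 (t+1) i s' = ∑ s, ∑ a, betaF K P mu al m0 t i s a * P t i s a s' := rfl

variable {K L : ℕ} {P : ℕ → Fin K → S → A → S → ℝ} {C : ℕ → Fin K → S → A → ℝ}
  {B : ℕ → ℝ} {μ0 : Fin K → S → ℝ} {mu : ℕ → Fin K → S → ℝ} {al : ℕ → Fin K → S → A → ℝ}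
  {m0 : Fin K → S → ℝ}

lemma hat_bounds (hf : MFFeasible K L P C B μ0 mu al)
    (hP0 : ∀ t i s a s', 0 ≤ P t i s a s')
    (h0 : ∀ i s, 0 ≤ m0 i s ∧ m0 i s ≤ μ0 i s) :
    ∀ t < L, ∀ i s, 0 ≤ hatM K P mu al m0 t i s ∧ hatM K P mu al m0 t i s ≤ mu t i s := by
  obtain ⟨hstart, hflow, _, hcons, hpos⟩ := hf
  intro t
  induction t with
  | zero =>
    intro _ i s
    rw [hatM_zero, hstart]
    exact h0 i s
  | succ t ih =>
    intro ht i' s''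
    have ht' : t < L := Nat.lt_of_succ_lt ht
    have hb : ∀ i s a, 0 ≤ betaF K P mu al m0 t i s a ∧ betaF K P mu al m0 t i s a ≤ al t i s a := by
      intro i s a
      by_cases h : mu t i s = 0
      · simp only [betaF, if_pos h, zero_mul]
        exact ⟨le_refl 0, hpos t i s a⟩
      · have h1 := ih ht' i s
        have hm : 0 ≤ mu t i s := le_trans h1.1 h1.2
        have hmpos : 0 < mu t i s := lt_of_le_of_ne hm (Ne.symm h)
        have hr0 : 0 ≤ hatM K P mu al m0 t i s / mu t i s := div_nonneg h1.1 hm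
        have hr1 : hatM K P mu al m0 t i s / mu t i s ≤ 1 := (div_le_one hmpos).mpr h1.2
        simp only [betaF, if_neg h]
        exact ⟨mul_nonneg hr0 (hpos t i s a),
          mul_le_of_le_one_left (hpos t i s a) hr1⟩
    constructor
    · rw [hatM_succ]
      exact Finset.sum_nonneg fun s _ => Finset.sum_nonneg fun a _ =>
        mul_nonneg (hb i' s a).1 (hP0 t i' s a s'')
    · rw [hatM_succ, hflow t ht i' s'']
      exact Finset.sum_le_sum fun s _ => Finset.sum_le_sum fun a _ =>
        mul_le_mul_of_nonneg_right (hb i' s a).2 (hP0 t i' s a s'')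

lemma beta_bounds (hf : MFFeasible K L P C B μ0 mu al)
    (hP0 : ∀ t i s a s', 0 ≤ P t i s a s')
    (h0 : ∀ i s, 0 ≤ m0 i s ∧ m0 i s ≤ μ0 i s) :
    ∀ t < L, ∀ i s a, 0 ≤ betaF K P mu al m0 t i s a ∧
      betaF K P mu al m0 t i s a ≤ al t i s a := by
  intro t ht i s a
  by_cases h : mu t i s = 0
  · simp only [betaF, if_pos h, zero_mul]
    exact ⟨le_refl 0, hf.2.2.2.2 t i s a⟩
  · have h1 := hat_bounds hf hP0 h0 t ht i s
    have hm : 0 ≤ mu t i s := le_trans h1.1 h1.2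
    have hmpos : 0 < mu t i s := lt_of_le_of_ne hm (Ne.symm h)
    have hr0 : 0 ≤ hatM K P mu al m0 t i s / mu t i s := div_nonneg h1.1 hm
    have hr1 : hatM K P mu al m0 t i s / mu t i s ≤ 1 := (div_le_one hmpos).mpr h1.2
    simp only [betaF, if_neg h]
    exact ⟨mul_nonneg hr0 (hf.2.2.2.2 t i s a),
      mul_le_of_le_one_left (hf.2.2.2.2 t i s a) hr1⟩

lemma beta_sum (hf : MFFeasible K L P C B μ0 mu al)
    (hP0 : ∀ t i s a s', 0 ≤ P t i s a s')
    (h0 : ∀ i s, 0 ≤ m0 i s ∧ m0 i s ≤ μ0 i s) :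
    ∀ t < L, ∀ i s, ∑ a, betaF K P mu al m0 t i s a = hatM K P mu al m0 t i s := by
  intro t ht i s
  by_cases h : mu t i s = 0
  · have h1 := hat_bounds hf hP0 h0 t ht i s
    have hz : hatM K P mu al m0 t i s = 0 := le_antisymm (h ▸ h1.2) h1.1
    simp [betaF, h, hz]
  · simp only [betaF, if_neg h]
    rw [← Finset.mul_sum, hf.2.2.2.1 t ht i s, div_mul_cancel₀ _ h]

lemma mass_eq (hf : MFFeasible K L P C B μ0 mu al)
    (hP1 : ∀ t i s a, ∑ s', P t i s a s' = 1) :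
    ∀ t < L, ∑ i, ∑ s, mu t i s = ∑ i, ∑ s, μ0 i s := by
  intro t
  induction t with
  | zero => intro _; rw [hf.1]
  | succ t ih =>
    intro ht
    have ht' : t < L := Nat.lt_of_succ_lt ht
    calc ∑ i, ∑ s', mu (t+1) i s'
        = ∑ i, ∑ s', ∑ s, ∑ a, al t i s a * P t i s a s' :=
          Finset.sum_congr rfl fun i _ => Finset.sum_congr rfl fun s' _ => hf.2.1 t ht i s'
      _ = ∑ i, ∑ s, ∑ a, al t i s a :=
          Finset.sum_congr rfl fun i _ => sum_mul_P _ (fun s a => hP1 t i s a) _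
      _ = ∑ i, ∑ s, mu t i s :=
          Finset.sum_congr rfl fun i _ => Finset.sum_congr rfl fun s _ => hf.2.2.2.1 t ht' i s
      _ = ∑ i, ∑ s, μ0 i s := ih ht'

lemma hat_mass (hf : MFFeasible K L P C B μ0 mu al)
    (hP0 : ∀ t i s a s', 0 ≤ P t i s a s')
    (hP1 : ∀ t i s a, ∑ s', P t i s a s' = 1)
    (h0 : ∀ i s, 0 ≤ m0 i s ∧ m0 i s ≤ μ0 i s) :
    ∀ t < L, ∑ i, ∑ s, hatM K P mu al m0 t i s = ∑ i, ∑ s, m0 i s := by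
  intro t
  induction t with
  | zero => intro _; rw [hatM_zero]
  | succ t ih =>
    intro ht
    have ht' : t < L := Nat.lt_of_succ_lt ht
    calc ∑ i, ∑ s', hatM K P mu al m0 (t+1) i s'
        = ∑ i, ∑ s', ∑ s, ∑ a, betaF K P mu al m0 t i s a * P t i s a s' :=
          Finset.sum_congr rfl fun i _ => Finset.sum_congr rfl fun s' _ => hatM_succ _ _ _ _ _ _ _ _
      _ = ∑ i, ∑ s, ∑ a, betaF K P mu al m0 t i s a :=
          Finset.sum_congr rfl fun i _ => sum_mul_P _ (fun s a => hP1 t i s a) _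
      _ = ∑ i, ∑ s, hatM K P mu al m0 t i s :=
          Finset.sum_congr rfl fun i _ => Finset.sum_congr rfl fun s _ => beta_sum hf hP0 h0 t ht' i s
      _ = ∑ i, ∑ s, m0 i s := ih ht'

lemma reward_le {R : ℕ → Fin K → S → A → ℝ} {Rmax : ℝ}
    (hf : MFFeasible K L P C B μ0 mu al)
    (hP1 : ∀ t i s a, ∑ s', P t i s a s' = 1)
    (hR : ∀ t i s a, R t i s a ∈ Set.Icc 0 Rmax) :
    ∑ t ∈ Finset.range L, ∑ i, ∑ s, ∑ a, al t i s a * R t i s a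
      ≤ (L : ℝ) * (Rmax * ∑ i, ∑ s, μ0 i s) := by
  have key : ∀ t < L, ∑ i, ∑ s, ∑ a, al t i s a * R t i s a
      ≤ Rmax * ∑ i, ∑ s, μ0 i s := by
    intro t ht
    calc ∑ i, ∑ s, ∑ a, al t i s a * R t i s a
        ≤ ∑ i, ∑ s, ∑ a, al t i s a * Rmax :=
          Finset.sum_le_sum fun i _ => Finset.sum_le_sum fun s _ => Finset.sum_le_sum fun a _ =>
            mul_le_mul_of_nonneg_left (hR t i s a).2 (hf.2.2.2.2 t i s a)
      _ = Rmax * ∑ i, ∑ s, mu t i s := by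
          rw [Finset.mul_sum]
          refine Finset.sum_congr rfl fun i _ => ?_
          rw [Finset.mul_sum]
          refine Finset.sum_congr rfl fun s _ => ?_
          rw [← hf.2.2.2.1 t ht i s, ← Finset.sum_mul, mul_comm]
      _ = Rmax * ∑ i, ∑ s, μ0 i s := by rw [mass_eq hf hP1 t ht]
  calc ∑ t ∈ Finset.range L, ∑ i, ∑ s, ∑ a, al t i s a * R t i s a
      ≤ ∑ _t ∈ Finset.range L, Rmax * ∑ i, ∑ s, μ0 i s :=
        Finset.sum_le_sum fun t ht => key t (Finset.mem_range.mp ht)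
    _ = (L : ℝ) * (Rmax * ∑ i, ∑ s, μ0 i s) := by
        rw [Finset.sum_const, Finset.card_range, nsmul_eq_mul]

lemma mf_nonempty (K L : ℕ) (P : ℕ → Fin K → S → A → S → ℝ)
    (C : ℕ → Fin K → S → A → ℝ) (B : ℕ → ℝ) (μ0 : Fin K → S → ℝ)
    (hP0 : ∀ t i s a s', 0 ≤ P t i s a s')
    (hzero : ∀ t i s, ∃ a, C t i s a = 0) (hB : ∀ t, 0 ≤ B t)
    (hμ0 : ∀ i s, 0 ≤ μ0 i s) :
    ∃ mu al, MFFeasible K L P C B μ0 mu al := by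
  set a0 : ℕ → Fin K → S → A := fun t i s => Classical.choose (hzero t i s) with ha0
  refine ⟨nuF K P a0 μ0,
    fun t i s a => if a = a0 t i s then nuF K P a0 μ0 t i s else 0, rfl, ?_, ?_, ?_, ?_⟩
  · intro t _ i s'
    rw [nuF_succ]
    simp only [ite_mul, zero_mul, Finset.sum_ite_eq', Finset.mem_univ, if_true]
  · intro t _
    have : ∀ i s, ∑ a, (if a = a0 t i s then nuF K P a0 μ0 t i s else 0) * C t i s a = 0 := by
      intro i s
      simp only [ite_mul, zero_mul, Finset.sum_ite_eq', Finset.mem_univ, if_true]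
      rw [Classical.choose_spec (hzero t i s), mul_zero]
    calc ∑ i, ∑ s, ∑ a, (if a = a0 t i s then nuF K P a0 μ0 t i s else 0) * C t i s a
        = 0 := Finset.sum_eq_zero fun i _ => Finset.sum_eq_zero fun s _ => this i s
      _ ≤ B t := hB t
  · intro t _ i s
    simp [Finset.sum_ite_eq']
  · intro t i s a
    by_cases h : a = a0 t i s
    · simp only [if_pos h]
      exact nuF_nonneg hP0 hμ0 t i s
    · simp [h]

lemma mf_one_sided (K L : ℕ) (hL : 0 < L)
    (P : ℕ → Fin K → S → A → S → ℝ) (R C : ℕ → Fin K → S → A → ℝ) (B : ℕ → ℝ)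
    (Rmax : ℝ) (hRmax : 0 ≤ Rmax)
    (hP0 : ∀ t i s a s', 0 ≤ P t i s a s')
    (hP1 : ∀ t i s a, ∑ s', P t i s a s' = 1)
    (hR : ∀ t i s a, R t i s a ∈ Set.Icc 0 Rmax)
    (hC : ∀ t i s a, 0 ≤ C t i s a)
    (hzero : ∀ t i s, ∃ a, C t i s a = 0)
    (hB : ∀ t, 0 ≤ B t)
    (μ μ' : Fin K → S → ℝ)
    (hμ : ∀ i s, 0 ≤ μ i s) (hμ' : ∀ i s, 0 ≤ μ' i s) :

    MFValue K L P R C B μ ≤ MFValue K L P R C B μ'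
      + (L : ℝ) * (Rmax * ∑ i, ∑ s, max (μ i s - μ' i s) 0) := by
  classical
  choose a0 hca0 using hzero
  set D := ∑ i, ∑ s, max (μ i s - μ' i s) 0 with hDdef
  simp only [MFValue]
  have hbdd : BddAbove { r : ℝ | ∃ mu al, MFFeasible K L P C B μ' mu al ∧
      r = ∑ t ∈ Finset.range L, ∑ i, ∑ s, ∑ a, al t i s a * R t i s a } := by
    refine ⟨(L : ℝ) * (Rmax * ∑ i, ∑ s, μ' i s), ?_⟩
    rintro r ⟨mu, al, hf, rfl⟩
    exact reward_le hf hP1 hR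
  obtain ⟨mu0, al0, hf0⟩ := mf_nonempty K L P C B μ hP0 (fun t i s => ⟨a0 t i s, hca0 t i s⟩) hB hμ
  have hne : { r : ℝ | ∃ mu al, MFFeasible K L P C B μ mu al ∧
      r = ∑ t ∈ Finset.range L, ∑ i, ∑ s, ∑ a, al t i s a * R t i s a }.Nonempty :=
    ⟨_, mu0, al0, hf0, rfl⟩
  refine csSup_le hne ?_
  rintro r ⟨mu, al, hf, rfl⟩
  set m0 : Fin K → S → ℝ := fun i s => min (μ i s) (μ' i s) with hm0def
  set n0 : Fin K → S → ℝ := fun i s => μ' i s - m0 i s with hn0def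
  have h0 : ∀ i s, 0 ≤ m0 i s ∧ m0 i s ≤ μ i s := fun i s =>
    ⟨le_min (hμ i s) (hμ' i s), min_le_left _ _⟩
  have hn0 : ∀ i s, 0 ≤ n0 i s := fun i s => sub_nonneg.mpr (min_le_right _ _)
  have hnu : ∀ t i s, 0 ≤ nuF K P a0 n0 t i s := nuF_nonneg hP0 hn0
  have hbb := beta_bounds hf hP0 h0
  have hbs := beta_sum hf hP0 h0
  set AL : ℕ → Fin K → S → A → ℝ := fun t i s a =>
    if t < L then betaF K P mu al m0 t i s a
      + (if a = a0 t i s then nuF K P a0 n0 t i s else 0) else 0 with hALdef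
  set MU : ℕ → Fin K → S → ℝ := fun t i s =>
    if t < L then hatM K P mu al m0 t i s + nuF K P a0 n0 t i s else 0 with hMUdef
  have hfeas : MFFeasible K L P C B μ' MU AL := by
    refine ⟨?_, ?_, ?_, ?_, ?_⟩
    · funext i s
      show (if 0 < L then hatM K P mu al m0 0 i s + nuF K P a0 n0 0 i s else 0) = μ' i s
      rw [if_pos hL, hatM_zero, nuF_zero]
      show m0 i s + (μ' i s - m0 i s) = μ' i s
      ring
    · intro t ht i s'
      have ht' : t < L := Nat.lt_of_succ_lt ht
      show (if t + 1 < L then _ else 0) = _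
      rw [if_pos ht]
      simp only [hALdef, if_pos ht', add_mul, ite_mul, zero_mul, Finset.sum_add_distrib,
        Finset.sum_ite_eq', Finset.mem_univ, if_true, hatM_succ, nuF_succ]
    · intro t ht
      have hcost : ∑ i, ∑ s, ∑ a, AL t i s a * C t i s a
          = (∑ i, ∑ s, ∑ a, betaF K P mu al m0 t i s a * C t i s a)
            + ∑ i, ∑ s, nuF K P a0 n0 t i s * C t i s (a0 t i s) := by
        simp only [hALdef, if_pos ht, add_mul, ite_mul, zero_mul, Finset.sum_add_distrib,
          Finset.sum_ite_eq', Finset.mem_univ, if_true]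
      have h2 : ∑ i, ∑ s, nuF K P a0 n0 t i s * C t i s (a0 t i s) = 0 :=
        Finset.sum_eq_zero fun i _ => Finset.sum_eq_zero fun s _ => by
          rw [hca0 t i s, mul_zero]
      rw [hcost, h2, add_zero]
      refine le_trans ?_ (hf.2.2.1 t ht)
      exact Finset.sum_le_sum fun i _ => Finset.sum_le_sum fun s _ =>
        Finset.sum_le_sum fun a _ =>
          mul_le_mul_of_nonneg_right (hbb t ht i s a).2 (hC t i s a)
    · intro t ht i s
      show (∑ a, AL t i s a) = (if t < L then _ else 0)
      rw [if_pos ht]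
      simp only [hALdef, if_pos ht, Finset.sum_add_distrib, Finset.sum_ite_eq',
        Finset.mem_univ, if_true, hbs t ht i s]
    · intro t i s a
      by_cases ht : t < L
      · show (0:ℝ) ≤ if t < L then _ else 0
        rw [if_pos ht]
        refine add_nonneg (hbb t ht i s a).1 ?_
        by_cases h : a = a0 t i s
        · rw [if_pos h]; exact hnu t i s
        · rw [if_neg h]
      · show (0:ℝ) ≤ if t < L then _ else 0
        rw [if_neg ht]
  have hle2 : (∑ t ∈ Finset.range L, ∑ i, ∑ s, ∑ a, AL t i s a * R t i s a)
      ≤ sSup { r : ℝ | ∃ mu al, MFFeasible K L P C B μ' mu al ∧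
        r = ∑ t ∈ Finset.range L, ∑ i, ∑ s, ∑ a, al t i s a * R t i s a } :=
    le_csSup hbdd ⟨MU, AL, hfeas, rfl⟩
  have hmassmu := mass_eq hf hP1
  have hmasshat := hat_mass hf hP0 hP1 h0
  have hgap : ∑ i, ∑ s, (μ i s - m0 i s) = D := by
    refine Finset.sum_congr rfl fun i _ => Finset.sum_congr rfl fun s _ => ?_
    show μ i s - min (μ i s) (μ' i s) = max (μ i s - μ' i s) 0
    rcases le_total (μ i s) (μ' i s) with h | h
    · rw [min_eq_left h, max_eq_right (sub_nonpos.mpr h), sub_self]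
    · rw [min_eq_right h, max_eq_left (sub_nonneg.mpr h)]
  have key : ∀ t ∈ Finset.range L, ∑ i, ∑ s, ∑ a, al t i s a * R t i s a
      ≤ (∑ i, ∑ s, ∑ a, AL t i s a * R t i s a) + Rmax * D := by
    intro t htm
    have ht := Finset.mem_range.mp htm
    have hALR : ∑ i, ∑ s, ∑ a, betaF K P mu al m0 t i s a * R t i s a
        ≤ ∑ i, ∑ s, ∑ a, AL t i s a * R t i s a := by
      refine Finset.sum_le_sum fun i _ => Finset.sum_le_sum fun s _ =>
        Finset.sum_le_sum fun a _ => ?_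
      show _ ≤ (if t < L then _ else 0) * R t i s a
      rw [if_pos ht, add_mul]
      refine le_add_of_nonneg_right (mul_nonneg ?_ (hR t i s a).1)
      by_cases h : a = a0 t i s
      · rw [if_pos h]; exact hnu t i s
      · rw [if_neg h]
    have hsplit : ∑ i, ∑ s, ∑ a, al t i s a * R t i s a
        - ∑ i, ∑ s, ∑ a, betaF K P mu al m0 t i s a * R t i s a
        = ∑ i, ∑ s, ∑ a, (al t i s a - betaF K P mu al m0 t i s a) * R t i s a := by
      simp [Finset.sum_sub_distrib, sub_mul]
    have hgapR : ∑ i, ∑ s, ∑ a, (al t i s a - betaF K P mu al m0 t i s a) * R t i s a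
        ≤ Rmax * D := by
      calc ∑ i, ∑ s, ∑ a, (al t i s a - betaF K P mu al m0 t i s a) * R t i s a
          ≤ ∑ i, ∑ s, ∑ a, (al t i s a - betaF K P mu al m0 t i s a) * Rmax :=
            Finset.sum_le_sum fun i _ => Finset.sum_le_sum fun s _ =>
              Finset.sum_le_sum fun a _ =>
                mul_le_mul_of_nonneg_left (hR t i s a).2 (sub_nonneg.mpr (hbb t ht i s a).2)
        _ = ((∑ i, ∑ s, mu t i s) - ∑ i, ∑ s, hatM K P mu al m0 t i s) * Rmax := by
            have e1 : ∀ i s, ∑ a, (al t i s a - betaF K P mu al m0 t i s a) * Rmax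
                = (mu t i s - hatM K P mu al m0 t i s) * Rmax := by
              intro i s
              rw [← Finset.sum_mul, Finset.sum_sub_distrib, hf.2.2.2.1 t ht i s,
                hbs t ht i s]
            simp only [e1, ← Finset.sum_mul, ← Finset.sum_sub_distrib]
        _ = Rmax * D := by
            rw [hmassmu t ht, hmasshat t ht, mul_comm]
            congr 1
            rw [← hgap]
            simp [Finset.sum_sub_distrib]
    linarith [hsplit, hgapR, hALR]
  calc ∑ t ∈ Finset.range L, ∑ i, ∑ s, ∑ a, al t i s a * R t i s a
      ≤ ∑ t ∈ Finset.range L,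
          ((∑ i, ∑ s, ∑ a, AL t i s a * R t i s a) + Rmax * D) :=
        Finset.sum_le_sum key
    _ = (∑ t ∈ Finset.range L, ∑ i, ∑ s, ∑ a, AL t i s a * R t i s a)
          + (L : ℝ) * (Rmax * D) := by
        rw [Finset.sum_add_distrib, Finset.sum_const, Finset.card_range, nsmul_eq_mul]
    _ ≤ _ := by
        have := hle2
        linarith

end Aux

/-- Lipschitz property of the mean-field LP value: for two start
states `μ, μ'` (of equal total mass) at ℓ1 distance `δ`, the optimal LP values over a
horizon of length `L` (i.e., time steps `t, ..., T` with `L = T − t + 1`) differ by at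
most `L·R_max·δ/2`. -/
theorem stmt_14 {S A : Type} [Fintype S] [Fintype A] [Nonempty S] [Nonempty A]
    (K L : ℕ) (hK : 0 < K) (hL : 0 < L)
    (P : ℕ → Fin K → S → A → S → ℝ) (R C : ℕ → Fin K → S → A → ℝ) (B : ℕ → ℝ)
    (Rmax : ℝ)
    (hP0 : ∀ t i s a s', 0 ≤ P t i s a s')
    (hP1 : ∀ t i s a, ∑ s', P t i s a s' = 1)
    (hR : ∀ t i s a, R t i s a ∈ Set.Icc 0 Rmax)
    (hC : ∀ t i s a, 0 ≤ C t i s a)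
    (hzero : ∀ t i s, ∃ a, C t i s a = 0)
    (hB : ∀ t, 0 ≤ B t)
    (μ μ' : Fin K → S → ℝ)
    (hμ : ∀ i s, 0 ≤ μ i s) (hμ' : ∀ i s, 0 ≤ μ' i s)
    (hmass : ∑ i, ∑ s, μ i s = ∑ i, ∑ s, μ' i s)
    (δ : ℝ) (hδ : ∑ i, ∑ s, |μ i s - μ' i s| = δ) :
    |MFValue K L P R C B μ - MFValue K L P R C B μ'| ≤ (L : ℝ) * Rmax * δ / 2 := by
  have hRmax : 0 ≤ Rmax := by
    have h := hR 0 ⟨0, hK⟩ (Classical.arbitrary S) (Classical.arbitrary A)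
    exact le_trans h.1 h.2
  have hsum0 : ∑ i, ∑ s, (μ i s - μ' i s) = 0 := by
    simp only [Finset.sum_sub_distrib]
    rw [hmass, sub_self]
  have hsum0' : ∑ i, ∑ s, (μ' i s - μ i s) = 0 := by
    simp only [Finset.sum_sub_distrib]
    rw [hmass, sub_self]
  have habs : ∀ a : ℝ, max a 0 * 2 = a + |a| := by
    intro a
    rcases le_total a 0 with h | h
    · rw [max_eq_right h, abs_of_nonpos h]; ring
    · rw [max_eq_left h, abs_of_nonneg h]; ring
  have h1 : ∑ i, ∑ s, max (μ i s - μ' i s) 0 = δ / 2 := by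
    have e2 : (∑ i, ∑ s, max (μ i s - μ' i s) 0) * 2
        = ∑ i, ∑ s, ((μ i s - μ' i s) + |μ i s - μ' i s|) := by
      rw [Finset.sum_mul]
      refine Finset.sum_congr rfl fun i _ => ?_
      rw [Finset.sum_mul]
      exact Finset.sum_congr rfl fun s _ => habs _
    simp only [Finset.sum_add_distrib] at e2
    rw [hsum0, hδ] at e2
    linarith
  have h2 : ∑ i, ∑ s, max (μ' i s - μ i s) 0 = δ / 2 := by
    have hδ' : ∑ i, ∑ s, |μ' i s - μ i s| = δ := by
      rw [← hδ]
      exact Finset.sum_congr rfl fun i _ => Finset.sum_congr rfl fun s _ => abs_sub_comm _ _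
    have e2 : (∑ i, ∑ s, max (μ' i s - μ i s) 0) * 2
        = ∑ i, ∑ s, ((μ' i s - μ i s) + |μ' i s - μ i s|) := by
      rw [Finset.sum_mul]
      refine Finset.sum_congr rfl fun i _ => ?_
      rw [Finset.sum_mul]
      exact Finset.sum_congr rfl fun s _ => habs _
    simp only [Finset.sum_add_distrib] at e2
    rw [hsum0', hδ'] at e2
    linarith
  have ha := mf_one_sided K L hL P R C B Rmax hRmax hP0 hP1 hR hC hzero hB μ μ' hμ hμ'
  have hb := mf_one_sided K L hL P R C B Rmax hRmax hP0 hP1 hR hC hzero hB μ' μ hμ' hμ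
  rw [h1] at ha
  rw [h2] at hb
  have he : (L : ℝ) * (Rmax * (δ / 2)) = (L : ℝ) * Rmax * δ / 2 := by ring
  rw [abs_sub_le_iff]
  constructor <;> linarith
end

section
/- One-step mean-field drift bound: suppose at time t−1 the action α prescribes, for each cluster i, at most N_i arms transitioning independently according to row-stochastic kernels over |S| states, with at most K|S||A| arms deviating (due to rounding) from the prescribed action. Then the ℓ1 distance between the realized empirical next-state count vector and its mean-field (expected) prediction satisfies E[||μ_real − μ_mf||_1] ≤ √(K|S|N) + K|S||A|, where N = Σ_i N_i. -/
/-!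
Write `F_{i,s}` for the number of arms of cluster `i` landing in state `s`. By the triangle
inequality `E|F_{i,s} - μmf_{i,s}| ≤ E|F_{i,s} - E F_{i,s}| + |μmf_{i,s} - E F_{i,s}|`, and the
second terms sum to at most the rounding bias `K|S||A|`. The first term is at most
`√Var F_{i,s}`. Each `F_{i,s}` is a sum of independent Bernoulli variables, so its variance is
at most its mean, and the means add up to `N` because every arm lands in exactly one cell.
Cauchy–Schwarz over the `K|S|` cells then gives `∑ √Var F_{i,s} ≤ √(K|S|N)`.
-/

open MeasureTheory ProbabilityTheory Finset

lemma Real.sum_sqrt_le_sqrt_card_mul_sum {ι : Type*} (s : Finset ι) {v : ι → ℝ}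
    (hv : ∀ i, 0 ≤ v i) : ∑ i ∈ s, √(v i) ≤ √(#s * ∑ i ∈ s, v i) := by
  have h := Real.sum_sqrt_mul_sqrt_le s (f := fun _ ↦ 1) (fun _ ↦ zero_le_one) hv
  simpa [Real.sqrt_mul (Nat.cast_nonneg _)] using h

namespace ProbabilityTheory

variable {Ω : Type*} {mΩ : MeasurableSpace Ω} {μ : Measure Ω} [IsProbabilityMeasure μ]

lemma integral_abs_sub_integral_le_sqrt_variance {f : Ω → ℝ} (hf : MemLp f 2 μ) :
    ∫ ω, |f ω - μ[f]| ∂μ ≤ √(variance f μ) := by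
  have hg : MemLp (fun ω ↦ |f ω - μ[f]|) 2 μ := (hf.sub (memLp_const _)).abs
  -- `(E|g|)² ≤ E g²` is the nonnegativity of `Var |g|`.
  have h := variance_nonneg (fun ω ↦ |f ω - μ[f]|) μ
  rw [variance_eq_sub hg] at h
  rw [variance_eq_integral hf.aemeasurable]
  refine Real.le_sqrt_of_sq_le ?_
  simpa only [Pi.pow_apply, sq_abs, sub_nonneg] using h

lemma integral_abs_sub_le_sqrt_variance_add {f : Ω → ℝ} (hf : MemLp f 2 μ) (a : ℝ) :
    ∫ ω, |f ω - a| ∂μ ≤ √(variance f μ) + |a - μ[f]| := by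
  have hint : Integrable (fun ω ↦ |f ω - μ[f]|) μ :=
    ((hf.integrable one_le_two).sub (integrable_const _)).abs
  calc ∫ ω, |f ω - a| ∂μ ≤ ∫ ω, (|f ω - μ[f]| + |a - μ[f]|) ∂μ := by
        refine integral_mono ((hf.integrable one_le_two).sub (integrable_const _)).abs
          (hint.add (integrable_const _)) fun ω ↦ ?_
        simpa only [sub_sub_sub_cancel_right] using abs_sub (f ω - μ[f]) (a - μ[f])
    _ = ∫ ω, |f ω - μ[f]| ∂μ + |a - μ[f]| := by
        rw [integral_add hint (integrable_const _), integral_const, probReal_univ, one_smul]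
    _ ≤ √(variance f μ) + |a - μ[f]| := by
        gcongr
        exact integral_abs_sub_integral_le_sqrt_variance hf

lemma integral_sum_abs_sub_le {ι : Type*} [Fintype ι] {F : ι → Ω → ℝ}
    (hF : ∀ k, MemLp (F k) 2 μ) (a : ι → ℝ) :
    ∫ ω, ∑ k, |F k ω - a k| ∂μ
      ≤ √(Fintype.card ι * ∑ k, variance (F k) μ) + ∑ k, |a k - μ[F k]| := by
  have hint (k : ι) : Integrable (fun ω ↦ |F k ω - a k|) μ :=
    (((hF k).integrable one_le_two).sub (integrable_const (a k))).abs
  rw [integral_finsetSum _ fun k _ ↦ hint k]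
  calc ∑ k, ∫ ω, |F k ω - a k| ∂μ ≤ ∑ k, (√(variance (F k) μ) + |a k - μ[F k]|) :=
        sum_le_sum fun k _ ↦ integral_abs_sub_le_sqrt_variance_add (hF k) (a k)
    _ ≤ √(Fintype.card ι * ∑ k, variance (F k) μ) + ∑ k, |a k - μ[F k]| := by
        rw [sum_add_distrib]
        gcongr
        exact Real.sum_sqrt_le_sqrt_card_mul_sum _ fun k ↦ variance_nonneg _ _

lemma variance_le_integral_of_sq_eq_self {f : Ω → ℝ} (hf : AEStronglyMeasurable f μ)
    (hsq : ∀ ω, f ω ^ 2 = f ω) : variance f μ ≤ μ[f] :=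
  (variance_le_expectation_sq hf).trans_eq (by simp only [Pi.pow_apply, hsq])

section IndependentCount

variable {ι β : Type*} [Fintype ι] [MeasurableSpace β] {X : ι → Ω → β}
  {p : ι → β → Prop} [∀ j, DecidablePred (p j)]

lemma measurable_card_filter (hX : ∀ j, Measurable (X j))
    (hp : ∀ j, MeasurableSet {b | p j b}) :
    Measurable fun ω ↦ (#{j | p j (X j ω)} : ℝ) := by
  simp_rw [natCast_card_filter]
  exact Finset.measurable_sum _ fun j _ ↦
    Measurable.ite (hX j (hp j)) measurable_const measurable_const

lemma memLp_card_filter (hX : ∀ j, Measurable (X j)) (hp : ∀ j, MeasurableSet {b | p j b})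
    (q : ENNReal) : MemLp (fun ω ↦ (#{j | p j (X j ω)} : ℝ)) q μ :=
  MemLp.of_bound (measurable_card_filter hX hp).aestronglyMeasurable (Fintype.card ι)
    (ae_of_all _ fun ω ↦ by simpa using card_le_univ _)

lemma variance_card_filter_le_integral (hX : ∀ j, Measurable (X j)) (hindep : iIndepFun X μ)
    (hp : ∀ j, MeasurableSet {b | p j b}) :
    variance (fun ω ↦ (#{j | p j (X j ω)} : ℝ)) μ ≤ ∫ ω, (#{j | p j (X j ω)} : ℝ) ∂μ := by
  set bernoulli : ι → Ω → ℝ := fun j ω ↦ if p j (X j ω) then 1 else 0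
  have hmeas (j : ι) : Measurable (bernoulli j) :=
    Measurable.ite (hX j (hp j)) measurable_const measurable_const
  have hcount : (fun ω ↦ (#{j | p j (X j ω)} : ℝ)) = ∑ j, bernoulli j := by
    ext ω
    simp only [natCast_card_filter, Finset.sum_apply, bernoulli]
  have hpair : Set.Pairwise ↑(univ : Finset ι) fun j k ↦ bernoulli j ⟂ᵢ[μ] bernoulli k :=
    fun j _ k _ hjk ↦ (hindep.indepFun hjk).comp
      (Measurable.ite (hp j) measurable_const measurable_const)
      (Measurable.ite (hp k) measurable_const measurable_const)
  have hLp (j : ι) : MemLp (bernoulli j) 2 μ :=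
    MemLp.of_bound (hmeas j).aestronglyMeasurable 1
      (ae_of_all _ fun ω ↦ by by_cases h : p j (X j ω) <;> simp [bernoulli, h])
  rw [hcount, IndepFun.variance_sum (fun j _ ↦ hLp j) hpair]
  calc ∑ j, variance (bernoulli j) μ ≤ ∑ j, μ[bernoulli j] := sum_le_sum fun j _ ↦
        variance_le_integral_of_sq_eq_self (hmeas j).aestronglyMeasurable fun ω ↦ by
          by_cases h : p j (X j ω) <;> simp [bernoulli, h]
    _ = μ[∑ j, bernoulli j] := by
        simp only [Finset.sum_apply]
        exact (integral_finsetSum _ fun j _ ↦ (hLp j).integrable one_le_two).symm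

end IndependentCount

end ProbabilityTheory

lemma Finset.sum_card_filter_eq_card {ι α : Type*} [Fintype ι] [Fintype α] [DecidableEq α]
    (f : ι → α) : ∑ a, #{j | f j = a} = Fintype.card ι :=
  (card_eq_sum_card_fiberwise fun _ _ ↦ mem_univ _).symm

/-- one-step mean-field drift bound: `N` arms, each arm `j` belonging
to a fixed cluster `c j ∈ [K]`, transition independently to random next states
`X j : Ω → S`.  `μmf` is the deterministic mean-field prediction of the next-state
counts; the rounding of the prescribed fractional action causes a bias of at most
`K|S||A|` between `μmf` and the true expected counts.  Then the expected ℓ1 distance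
between the realized empirical counts and `μmf` is at most `√(K|S|N) + K|S||A|`. -/
theorem stmt_17 {Ω : Type*} [MeasureSpace Ω] [IsProbabilityMeasure (ℙ : Measure Ω)]
    {S : Type*} [Fintype S] [DecidableEq S] [MeasurableSpace S] [MeasurableSingletonClass S]
    (K N Acard : ℕ) (c : Fin N → Fin K)
    (X : Fin N → Ω → S)
    (hmeas : ∀ j, Measurable (X j))
    (hindep : iIndepFun X ℙ)
    (μmf : Fin K → S → ℝ)
    (hbias : ∑ i : Fin K, ∑ s : S,
        |μmf i s - ∫ ω, (((Finset.univ.filter (fun j => c j = i ∧ X j ω = s)).card : ℝ))|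
      ≤ (K : ℝ) * Fintype.card S * Acard) :
    (∫ ω, ∑ i : Fin K, ∑ s : S,
        |(((Finset.univ.filter (fun j => c j = i ∧ X j ω = s)).card : ℝ)) - μmf i s|)
      ≤ Real.sqrt ((K : ℝ) * Fintype.card S * N) + (K : ℝ) * Fintype.card S * Acard := by
  let F : Fin K × S → Ω → ℝ := fun k ω ↦ #{j | c j = k.1 ∧ X j ω = k.2}
  have hp (k : Fin K × S) (j : Fin N) : MeasurableSet {b | c j = k.1 ∧ b = k.2} :=
    (Set.toFinite _).measurableSet
  have hF (k : Fin K × S) : MemLp (F k) 2 ℙ := memLp_card_filter hmeas (hp k) 2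
  have hmass (ω : Ω) : ∑ k, F k ω = N := by
    simp only [F]
    have h := Finset.sum_card_filter_eq_card fun j ↦ (c j, X j ω)
    simp only [Prod.ext_iff, Fintype.card_fin] at h
    exact_mod_cast h
  have hvar : ∑ k, variance (F k) ℙ ≤ N :=
    calc ∑ k, variance (F k) ℙ ≤ ∑ k, ∫ ω, F k ω :=
          sum_le_sum fun k _ ↦ (variance_card_filter_le_integral hmeas hindep (hp k) :)
      _ = N := by
          rw [← integral_finsetSum _ fun k _ ↦ (hF k).integrable one_le_two]
          simp [hmass]
  calc ∫ ω, ∑ i, ∑ s, |(#{j | c j = i ∧ X j ω = s} : ℝ) - μmf i s|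
      = ∫ ω, ∑ k, |F k ω - μmf k.1 k.2| := by simp only [F, Fintype.sum_prod_type]
    _ ≤ √(Fintype.card (Fin K × S) * ∑ k, variance (F k) ℙ) + ∑ k, |μmf k.1 k.2 - ∫ ω, F k ω| :=
        integral_sum_abs_sub_le hF _
    _ ≤ √((K : ℝ) * Fintype.card S * N) + (K : ℝ) * Fintype.card S * Acard := by
        rw [Fintype.card_prod, Fintype.card_fin, Nat.cast_mul]
        gcongr
        rw [Fintype.sum_prod_type]
        exact hbias
end
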